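/- arXiv:2304.09213 — 3 statements merged into one kernel-verified Lean document; each statement's English description precedes it below -/
import Mathlib

section
/- Let A be an n×d integer matrix, and let μ̃ : ℂ^n → ℂ^d denote the linear map μ̃(v)_j = Σ_{i=1}^n A_{i,j} v_i. Assume that μ̃ is surjective and that for every index i ∈ {1,…,n} there exists w ∈ ker μ̃ with w_i ≠ 0. Then for every ζ ∈ ℂ^d there exist x, y ∈ ℂ^n with x_i ≠ 0 and y_i ≠ 0 for all i, such that Σ_{i=1}^n A_{i,j} x_i y_i = ζ_j for all j = 1,…,d. In other words, the moment-map fiber μ^{-1}(ζ) meets the open set U of points with all coordinates nonzero. -/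
/-- Let `A` be an `n × d` integer matrix and `μ̃ : ℂ^n → ℂ^d` the linear map
`μ̃(v)_j = ∑_i A i j * v i`. If `μ̃` is surjective and for every `i` there is `w ∈ ker μ̃` with
`w i ≠ 0`, then for every `ζ ∈ ℂ^d` there are `x, y ∈ ℂ^n` with all coordinates nonzero such
that `∑_i A i j * x i * y i = ζ j` for all `j`; i.e. `μ⁻¹(ζ)` meets the set `U` of points with
all coordinates nonzero. -/
theorem stmt2 (n d : ℕ) (A : Matrix (Fin n) (Fin d) ℤ)
    (hsurj : Function.Surjective fun (v : Fin n → ℂ) (j : Fin d) => ∑ i, (A i j : ℂ) * v i)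
    (hker : ∀ i : Fin n, ∃ w : Fin n → ℂ, (∀ j, ∑ i', (A i' j : ℂ) * w i' = 0) ∧ w i ≠ 0) :
    ∀ ζ : Fin d → ℂ, ∃ x y : Fin n → ℂ, (∀ i, x i ≠ 0 ∧ y i ≠ 0) ∧
      ∀ j, ∑ i, (A i j : ℂ) * (x i * y i) = ζ j := by
  intro ζ
  -- Key claim: for every finset s there is u with μ̃(u) = ζ and u i ≠ 0 for i ∈ s.
  have key : ∀ s : Finset (Fin n), ∃ u : Fin n → ℂ,
      (∀ j, ∑ i, (A i j : ℂ) * u i = ζ j) ∧ ∀ i ∈ s, u i ≠ 0 := by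
    intro s
    induction s using Finset.induction with
    | empty =>
      obtain ⟨v, hv⟩ := hsurj ζ
      exact ⟨v, fun j => congrFun hv j, fun i hi => absurd hi (Finset.notMem_empty i)⟩
    | @insert a s ha ih =>
      obtain ⟨u, hu, hus⟩ := ih
      obtain ⟨w, hw, hwa⟩ := hker a
      obtain ⟨t, ht⟩ := Infinite.exists_notMem_finset
        ((insert a s).image fun i => -(u i) / (w i))
      refine ⟨fun i => u i + t * w i, ?_, ?_⟩
      · intro j
        have : ∑ i, (A i j : ℂ) * (u i + t * w i)
            = (∑ i, (A i j : ℂ) * u i) + t * ∑ i, (A i j : ℂ) * w i := by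
          rw [Finset.mul_sum, ← Finset.sum_add_distrib]
          refine Finset.sum_congr rfl fun i _ => by ring
        rw [this, hw j, hu j, mul_zero, add_zero]
      · intro i hi
        by_cases hwi : w i = 0
        · have hia : i ≠ a := fun h => hwa (h ▸ hwi)
          have : u i ≠ 0 := hus i ((Finset.mem_insert.1 hi).resolve_left hia)
          simpa [hwi] using this
        · intro hzero
          apply ht
          refine Finset.mem_image.2 ⟨i, hi, ?_⟩
          field_simp
          linear_combination -hzero
  obtain ⟨u, hu, hunz⟩ := key Finset.univ
  refine ⟨u, fun _ => 1, fun i => ⟨hunz i (Finset.mem_univ i), one_ne_zero⟩, fun j => ?_⟩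
  simpa using hu j
end

section
/- Let A be an n×d integer matrix and consider the action of T^d = (ℂ*)^d on ℂ^n × ℂ^n given by t·(x,y) = ((∏_j t_j^{A_{i,j}} x_i)_i, (∏_j t_j^{-A_{i,j}} y_i)_i). If (p,q) ∈ ℂ^n × ℂ^n satisfies p_i q_i ≠ 0 for all i, then the orbit T^d·(p,q) = { t·(p,q) : t ∈ (ℂ*)^d } is a closed subset of ℂ^n × ℂ^n in the standard Euclidean topology. -/
open Finset

lemma exists_zpow_root (w : ℂˣ) (a : ℤ) (ha : a ≠ 0) : ∃ ρ : ℂˣ, ρ ^ a = w := by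
  have key : ∀ (v : ℂˣ) (m : ℕ), m ≠ 0 → ∃ ρ : ℂˣ, ρ ^ (m : ℤ) = v := by
    intro v m hm
    obtain ⟨z, hz⟩ := IsAlgClosed.exists_pow_nat_eq (v : ℂ) (Nat.pos_of_ne_zero hm)
    have hz0 : z ≠ 0 := by
      intro h; rw [h] at hz
      exact v.ne_zero (by simpa [zero_pow hm] using hz.symm)
    refine ⟨Units.mk0 z hz0, ?_⟩
    ext
    push_cast
    simpa using hz
  obtain ⟨m, rfl | rfl⟩ := a.eq_nat_or_neg
  · exact key w m (by exact_mod_cast ha)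
  · obtain ⟨ρ, hρ⟩ := key w⁻¹ m (by simpa using ha)
    exact ⟨ρ, by rw [zpow_neg, hρ, inv_inv]⟩

section
variable {n d : ℕ} (A : Matrix (Fin n) (Fin d) ℤ)

noncomputable def fmap : (Fin n → ℤ) →ₗ[ℤ] (Fin d → ℤ) := Matrix.vecMulLinear A

lemma fmap_apply (u : Fin n → ℤ) (j : Fin d) : fmap A u j = ∑ i, u i * A i j := by
  simp [fmap, Matrix.vecMulLinear, Matrix.vecMul, dotProduct]

lemma fmap_single (i₀ : Fin n) (j : Fin d) : fmap A (Pi.single i₀ 1) j = A i₀ j := by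
  rw [fmap_apply, Finset.sum_eq_single i₀]
  · simp
  · intro b _ hb; simp [Pi.single_apply, hb]
  · simp

lemma prod_zpow_sum {ι : Type*} (g : ℂˣ) (s : Finset ι) (u : ι → ℤ) :
    ∏ i ∈ s, g ^ u i = g ^ (∑ i ∈ s, u i) := by
  induction s using Finset.cons_induction with
  | empty => simp
  | cons a s ha ih => simp [Finset.prod_cons, Finset.sum_cons, ih, zpow_add]

lemma char_eq_one (t : Fin d → ℂˣ) (u : Fin n → ℤ) (hu : fmap A u = 0) :
    ∏ i, (∏ j, t j ^ A i j) ^ u i = 1 := by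
  have step : ∀ i, (∏ j, t j ^ A i j) ^ u i = ∏ j, t j ^ (A i j * u i) := by
    intro i
    rw [← Finset.prod_zpow]
    exact Finset.prod_congr rfl fun j _ => by rw [← zpow_mul]
  calc ∏ i, (∏ j, t j ^ A i j) ^ u i
      = ∏ i, ∏ j, t j ^ (A i j * u i) := Finset.prod_congr rfl fun i _ => step i
    _ = ∏ j, ∏ i, t j ^ (A i j * u i) := Finset.prod_comm
    _ = ∏ j, t j ^ (∑ i, A i j * u i) := Finset.prod_congr rfl fun j _ => prod_zpow_sum _ _ _
    _ = 1 := by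
        refine Finset.prod_eq_one fun j _ => ?_
        have : ∑ i, A i j * u i = fmap A u j := by
          rw [fmap_apply]
          exact Finset.sum_congr rfl fun i _ => mul_comm _ _
        rw [this, hu]
        simp

lemma key_lemma (c : Fin n → ℂˣ)
    (h : ∀ u : Fin n → ℤ, fmap A u = 0 → ∏ i, c i ^ u i = 1) :
    ∃ t : Fin d → ℂˣ, ∀ i, c i = ∏ j, t j ^ A i j := by
  classical
  set f := fmap A with hf
  set L := LinearMap.range f with hLdef
  obtain ⟨r, snf⟩ := Submodule.smithNormalForm (Pi.basisFun ℤ (Fin d)) L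
  set G : (Fin n → ℤ) →+ Additive ℂˣ :=
    { toFun := fun u => Additive.ofMul (∏ i, c i ^ u i)
      map_zero' := by simp
      map_add' := by
        intro u v
        simp only [Pi.add_apply, zpow_add, Finset.prod_mul_distrib, ofMul_mul] } with hG
  have hGapp : ∀ u, G u = Additive.ofMul (∏ i, c i ^ u i) := fun u => rfl
  have hGker : ∀ u, f u = 0 → G u = 0 := by
    intro u hu
    rw [hGapp, h u hu]
    rfl
  have hmem : ∀ i : Fin r, ∃ u : Fin n → ℤ, f u = (snf.bN i : Fin d → ℤ) := by
    intro i
    exact LinearMap.mem_range.mp (snf.bN i).2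
  choose uu huu using hmem
  have ha : ∀ i : Fin r, snf.a i ≠ 0 := by
    intro i hai
    have h0 : (snf.bN i : Fin d → ℤ) = 0 := by rw [snf.snf i, hai, zero_smul]
    exact snf.bN.ne_zero i (by exact_mod_cast Subtype.ext h0)
  choose ρ hρ using fun i => exists_zpow_root (Additive.toMul (G (uu i))) (snf.a i) (ha i)
  set F : ((Fin d) →₀ ℤ) →+ Additive ℂˣ :=
    { toFun := fun w => Additive.ofMul (∏ i : Fin r, ρ i ^ w (snf.f i))
      map_zero' := by simp
      map_add' := by
        intro w v
        simp only [Finsupp.add_apply, zpow_add, Finset.prod_mul_distrib, ofMul_mul] } with hFdef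
  have hFapp : ∀ w, F w = Additive.ofMul (∏ i : Fin r, ρ i ^ w (snf.f i)) := fun w => rfl
  set X : (Fin d → ℤ) →+ Additive ℂˣ :=
    F.comp (snf.bM.repr.toLinearMap.toAddMonoidHom) with hXdef
  have hXapp : ∀ v, X v = F (snf.bM.repr v) := fun v => rfl
  have hFsingle : ∀ i : Fin r, F (Finsupp.single (snf.f i) 1) = Additive.ofMul (ρ i) := by
    intro i
    rw [hFapp]
    congr 1
    rw [Finset.prod_eq_single i]
    · simp
    · intro b _ hb
      have hne : snf.f i ≠ snf.f b := fun e => hb (snf.f.injective e.symm)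
      simp [Finsupp.single_apply, hne]
    · simp
  have hXf : ∀ u, X (f u) = G u := by
    intro u
    set l : L := ⟨f u, LinearMap.mem_range_self f u⟩ with hldef
    have hrep : f u = ∑ i, snf.bN.repr l i • (snf.bN i : Fin d → ℤ) := by
      have h0 := congrArg (Subtype.val) (snf.bN.sum_repr l)
      simp only [Submodule.coe_sum, Submodule.coe_smul] at h0
      exact h0.symm
    have hrepr : snf.bM.repr (f u) =
        ∑ i, (snf.bN.repr l i * snf.a i) • Finsupp.single (snf.f i) 1 := by
      have h2 : f u = ∑ i, (snf.bN.repr l i * snf.a i) • snf.bM (snf.f i) := by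
        rw [hrep]
        refine Finset.sum_congr rfl fun i _ => ?_
        rw [snf.snf i, smul_smul]
      rw [h2, map_sum]
      refine Finset.sum_congr rfl fun i _ => ?_
      rw [map_smul, Module.Basis.repr_self]
    have hXfu : X (f u) = ∑ i, (snf.bN.repr l i * snf.a i) • Additive.ofMul (ρ i) := by
      rw [hXapp, hrepr, map_sum]
      refine Finset.sum_congr rfl fun i _ => ?_
      rw [map_zsmul, hFsingle]
    set u' : Fin n → ℤ := ∑ i, snf.bN.repr l i • uu i with hu'def
    have hfu' : f u' = f u := by
      rw [hu'def, map_sum, hrep]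
      refine Finset.sum_congr rfl fun i _ => ?_
      rw [map_smul, huu]
    have hGu' : G u' = G u := by
      have h1 : G (u' - u) = 0 := hGker _ (by rw [map_sub, hfu', sub_self])
      rw [map_sub] at h1
      exact sub_eq_zero.mp h1
    have hGu'2 : G u' = ∑ i, (snf.bN.repr l i * snf.a i) • Additive.ofMul (ρ i) := by
      rw [hu'def, map_sum]
      refine Finset.sum_congr rfl fun i _ => ?_
      rw [map_zsmul]
      have hGuu : G (uu i) = snf.a i • Additive.ofMul (ρ i) := by
        have h3 : Additive.toMul (G (uu i)) = ρ i ^ snf.a i := (hρ i).symm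
        have h4 : G (uu i) = Additive.ofMul (ρ i ^ snf.a i) := by
          rw [← h3]; rfl
        rw [h4, ofMul_zpow]
      rw [hGuu, smul_smul]
    rw [hXfu, ← hGu'2, hGu']
  have hXval : ∀ v : Fin d → ℤ,
      Additive.toMul (X v) = ∏ j, Additive.toMul (X (Pi.single j 1)) ^ v j := by
    intro v
    have hv : v = ∑ j, v j • Pi.single j 1 := by
      funext k
      simp [Finset.sum_apply, Pi.single_apply, mul_ite]
    conv_lhs => rw [hv]
    rw [map_sum, toMul_sum]
    refine Finset.prod_congr rfl fun j _ => ?_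
    rw [map_zsmul, toMul_zsmul]
  refine ⟨fun j => Additive.toMul (X (Pi.single j 1)), fun i₀ => ?_⟩
  have h1 : G (Pi.single i₀ 1) = Additive.ofMul (c i₀) := by
    rw [hGapp]
    congr 1
    rw [Finset.prod_eq_single i₀]
    · simp
    · intro b _ hb; simp [Pi.single_apply, hb]
    · simp
  calc c i₀ = Additive.toMul (G (Pi.single i₀ 1)) := by rw [h1]; rfl
    _ = Additive.toMul (X (f (Pi.single i₀ 1))) := by rw [hXf]
    _ = ∏ j, Additive.toMul (X (Pi.single j 1)) ^ (f (Pi.single i₀ 1) j) := hXval _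
    _ = ∏ j, Additive.toMul (X (Pi.single j 1)) ^ A i₀ j := by
        refine Finset.prod_congr rfl fun j _ => ?_
        rw [hf, fmap_single]

end

/-- Let `A` be an `n × d` integer matrix, acting via `T^d = (ℂ*)^d` on
`ℂ^n × ℂ^n` by `t • (x, y) = ((∏_j t_j ^ A i j) x_i, (∏_j t_j ^ (-A i j)) y_i)`. If
`(p, q)` satisfies `p i * q i ≠ 0` for all `i`, then the orbit `T^d • (p, q)` is a closed
subset of `ℂ^n × ℂ^n` in the standard (Euclidean) topology. -/
theorem stmt4 (n d : ℕ) (A : Matrix (Fin n) (Fin d) ℤ) (p q : Fin n → ℂ)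
    (hpq : ∀ i, p i * q i ≠ 0) :
    IsClosed {z : (Fin n → ℂ) × (Fin n → ℂ) |
        ∃ t : Fin d → ℂˣ, z = (fun i => (∏ j, (t j : ℂ) ^ A i j) * p i,
                               fun i => (∏ j, (t j : ℂ) ^ (-A i j)) * q i)} := by
  classical
  have hp : ∀ i, p i ≠ 0 := fun i => left_ne_zero_of_mul (hpq i)
  set S : Set ((Fin n → ℂ) × (Fin n → ℂ)) :=
    {z | (∀ i, z.1 i * z.2 i = p i * q i) ∧
         ∀ u : Fin n → ℤ, fmap A u = 0 → ∏ i, (z.1 i / p i) ^ u i = 1} with hSdef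
  have hset : {z : (Fin n → ℂ) × (Fin n → ℂ) |
      ∃ t : Fin d → ℂˣ, z = (fun i => (∏ j, (t j : ℂ) ^ A i j) * p i,
                             fun i => (∏ j, (t j : ℂ) ^ (-A i j)) * q i)} = S := by
    ext z
    simp only [Set.mem_setOf_eq, hSdef]
    constructor
    · rintro ⟨t, rfl⟩
      set U : Fin n → ℂˣ := fun i => ∏ j, t j ^ A i j with hU
      have hUval : ∀ i, (U i : ℂ) = ∏ j, (t j : ℂ) ^ A i j := by
        intro i
        calc (U i : ℂ) = Units.coeHom ℂ (∏ j, t j ^ A i j) := rfl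
          _ = ∏ j, Units.coeHom ℂ (t j ^ A i j) := map_prod _ _ _
          _ = ∏ j, (t j : ℂ) ^ A i j := by
              exact Finset.prod_congr rfl fun j _ => Units.val_zpow_eq_zpow_val _ _
      have hUinv : ∀ i, (((U i)⁻¹ : ℂˣ) : ℂ) = ∏ j, (t j : ℂ) ^ (-A i j) := by
        intro i
        have h1 : (U i)⁻¹ = ∏ j, t j ^ (-A i j) := by
          rw [hU]
          simp only [← Finset.prod_inv_distrib]
          exact Finset.prod_congr rfl fun j _ => by rw [zpow_neg]
        calc (((U i)⁻¹ : ℂˣ) : ℂ) = Units.coeHom ℂ (∏ j, t j ^ (-A i j)) := by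
                rw [h1]; rfl
          _ = ∏ j, Units.coeHom ℂ (t j ^ (-A i j)) := map_prod _ _ _
          _ = ∏ j, (t j : ℂ) ^ (-A i j) := by
              exact Finset.prod_congr rfl fun j _ => Units.val_zpow_eq_zpow_val _ _
      constructor
      · intro i
        show ((∏ j, (t j : ℂ) ^ A i j) * p i) * ((∏ j, (t j : ℂ) ^ (-A i j)) * q i)
            = p i * q i
        rw [← hUval i, ← hUinv i, mul_mul_mul_comm, Units.mul_inv, one_mul]
      · intro u hu
        show ∏ i, (((∏ j, (t j : ℂ) ^ A i j) * p i) / p i) ^ u i = 1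
        have hdiv : ∀ i, ((∏ j, (t j : ℂ) ^ A i j) * p i) / p i = (U i : ℂ) := by
          intro i
          rw [mul_div_cancel_right₀ _ (hp i), hUval i]
        calc ∏ i, (((∏ j, (t j : ℂ) ^ A i j) * p i) / p i) ^ u i
            = ∏ i, (U i : ℂ) ^ u i := Finset.prod_congr rfl fun i _ => by rw [hdiv i]
          _ = ∏ i, Units.coeHom ℂ (U i ^ u i) :=
              Finset.prod_congr rfl fun i _ => (Units.val_zpow_eq_zpow_val _ _).symm
          _ = Units.coeHom ℂ (∏ i, U i ^ u i) := (map_prod _ _ _).symm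
          _ = 1 := by rw [char_eq_one A t u hu]; rfl
    · rintro ⟨h1, h2⟩
      have hz1 : ∀ i, z.1 i ≠ 0 := by
        intro i hzi
        exact hpq i (by rw [← h1 i, hzi, zero_mul])
      set c : Fin n → ℂˣ := fun i => Units.mk0 (z.1 i / p i)
        (div_ne_zero (hz1 i) (hp i)) with hc
      have hcchar : ∀ u : Fin n → ℤ, fmap A u = 0 → ∏ i, c i ^ u i = 1 := by
        intro u hu
        apply Units.ext
        calc ((∏ i, c i ^ u i : ℂˣ) : ℂ)
            = Units.coeHom ℂ (∏ i, c i ^ u i) := rfl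
          _ = ∏ i, Units.coeHom ℂ (c i ^ u i) := map_prod _ _ _
          _ = ∏ i, (z.1 i / p i) ^ u i :=
              Finset.prod_congr rfl fun i _ => by
                rw [Units.coeHom_apply, Units.val_zpow_eq_zpow_val]; rfl
          _ = 1 := h2 u hu
      obtain ⟨t, ht⟩ := key_lemma A c hcchar
      refine ⟨t, ?_⟩
      have hti : ∀ i, ∏ j, (t j : ℂ) ^ A i j = z.1 i / p i := by
        intro i
        have h3 := congrArg Units.val (ht i)
        calc ∏ j, (t j : ℂ) ^ A i j
            = ∏ j, Units.coeHom ℂ (t j ^ A i j) :=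
              Finset.prod_congr rfl fun j _ => (Units.val_zpow_eq_zpow_val _ _).symm
          _ = Units.coeHom ℂ (∏ j, t j ^ A i j) := (map_prod _ _ _).symm
          _ = (c i : ℂ) := h3.symm
          _ = z.1 i / p i := rfl
      have hz2 : ∀ i, z.2 i = (∏ j, (t j : ℂ) ^ (-A i j)) * q i := by
        intro i
        have hinv : ∏ j, (t j : ℂ) ^ (-A i j) = (z.1 i / p i)⁻¹ := by
          calc ∏ j, (t j : ℂ) ^ (-A i j)
              = ∏ j, ((t j : ℂ) ^ A i j)⁻¹ :=
                Finset.prod_congr rfl fun j _ => by rw [zpow_neg]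
            _ = (∏ j, (t j : ℂ) ^ A i j)⁻¹ := by rw [Finset.prod_inv_distrib]
            _ = (z.1 i / p i)⁻¹ := by rw [hti i]
        rw [hinv, inv_div, div_mul_eq_mul_div, eq_div_iff (hz1 i)]
        linear_combination h1 i
      have hz1eq : ∀ i, z.1 i = (∏ j, (t j : ℂ) ^ A i j) * p i := by
        intro i
        rw [hti i, div_mul_cancel₀ _ (hp i)]
      exact Prod.ext (funext hz1eq) (funext hz2)
  rw [hset]
  refine isClosed_of_closure_subset ?_
  intro z hz
  have hAclosed : IsClosed {w : (Fin n → ℂ) × (Fin n → ℂ) |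
      ∀ i, w.1 i * w.2 i = p i * q i} := by
    have heq : {w : (Fin n → ℂ) × (Fin n → ℂ) | ∀ i, w.1 i * w.2 i = p i * q i}
        = ⋂ i, {w : (Fin n → ℂ) × (Fin n → ℂ) | w.1 i * w.2 i = p i * q i} := by
      ext w; simp
    rw [heq]
    refine isClosed_iInter fun i => isClosed_eq ?_ continuous_const
    exact ((continuous_apply i).comp continuous_fst).mul
      ((continuous_apply i).comp continuous_snd)
  have hSsub : S ⊆ {w : (Fin n → ℂ) × (Fin n → ℂ) | ∀ i, w.1 i * w.2 i = p i * q i} :=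
    fun w hw => hw.1
  have h1 : ∀ i, z.1 i * z.2 i = p i * q i :=
    (hAclosed.closure_subset_iff.mpr hSsub) hz
  refine ⟨h1, ?_⟩
  intro u hu
  have hz1 : ∀ i, z.1 i ≠ 0 := by
    intro i hzi
    exact hpq i (by rw [← h1 i, hzi, zero_mul])
  set g : (Fin n → ℂ) × (Fin n → ℂ) → ℂ := fun w => ∏ i, (w.1 i / p i) ^ u i with hg
  have hcont : ContinuousAt g z := by
    apply tendsto_finset_prod
    intro i _
    refine ContinuousAt.zpow₀ ?_ _ (Or.inl (div_ne_zero (hz1 i) (hp i)))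
    exact (((continuous_apply i).comp continuous_fst).continuousAt).div_const _
  have himg : g z ∈ closure (g '' S) := hcont.continuousWithinAt.mem_closure_image hz
  have hsub : g '' S ⊆ {1} := by
    rintro _ ⟨w, hw, rfl⟩
    exact hw.2 u hu
  have : g z = 1 := closure_minimal hsub isClosed_singleton himg
  exact this
end

section
/- Let A be an n×d integer matrix such that: (i) the map ℤ^n → ℤ^d sending the i-th standard basis vector to the i-th row of A is surjective, and (ii) for every index i there exists an integer vector w with Σ_{i'} w_{i'} A_{i',j} = 0 for all j and w_i ≠ 0. Then for every ζ ∈ ℂ^d there exists a point (x,y) ∈ ℂ^n × ℂ^n with μ(x,y) = ζ whose T^d-orbit is closed in ℂ^n × ℂ^n (Euclidean topology) and whose stabilizer in T^d is trivial. In other words, the set of 0-stable points of μ^{-1}(ζ) is non-empty. -/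
lemma zpow_sum_aux {G : Type*} [CommGroup G] {ι : Type*} (a : G) (s : Finset ι) (f : ι → ℤ) :
    a ^ (∑ i ∈ s, f i) = ∏ i ∈ s, a ^ f i := by
  induction s using Finset.cons_induction with
  | empty => simp
  | cons i s hi ih => rw [Finset.sum_cons, Finset.prod_cons, zpow_add, ih]

lemma L1 {G : Type*} [CommGroup G] {ι κ : Type*} [Fintype ι] [Fintype κ]
    (u : ι → G) (c : κ → ι → ℤ) (a : κ → ℤ) :
    ∏ k, (∏ i, u i ^ c k i) ^ a k = ∏ i, u i ^ (∑ k, a k * c k i) := by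
  simp_rw [← Finset.prod_zpow, ← zpow_mul, zpow_sum_aux]
  rw [Finset.prod_comm]
  simp_rw [mul_comm]

lemma coe_prod_zpow {d : ℕ} (t : Fin d → ℂˣ) (a : Fin d → ℤ) :
    ∏ j, (t j : ℂ) ^ a j = ((∏ j, t j ^ a j : ℂˣ) : ℂ) := by
  rw [← Units.coeHom_apply, map_prod]
  simp [Units.val_zpow_eq_zpow_val]

lemma unit_split (u : ℂˣ) (m : ℤ) :
    (u : ℂ) ^ m.toNat * ((u⁻¹ : ℂˣ) : ℂ) ^ (-m).toNat = ((u ^ m : ℂˣ) : ℂ) := by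
  rw [← Units.val_pow_eq_pow_val, ← Units.val_pow_eq_pow_val, ← Units.val_mul]
  congr 1
  rw [← zpow_natCast u, ← zpow_natCast (u⁻¹), inv_zpow, ← zpow_neg, ← zpow_add]
  congr 1
  omega

lemma lemB {n : ℕ} (u : Fin n → ℂˣ) (q : Fin n → ℂ) (w : Fin n → ℤ) :
    (∏ i, ((u i : ℂ) * q i) ^ (w i).toNat) * (∏ i, (((u i)⁻¹ : ℂˣ) : ℂ) ^ (-w i).toNat)
      = ((∏ i, u i ^ w i : ℂˣ) : ℂ) * ∏ i, q i ^ (w i).toNat := by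
  simp_rw [mul_pow, Finset.prod_mul_distrib]
  rw [mul_right_comm, ← Finset.prod_mul_distrib]
  simp_rw [unit_split]
  rw [← Units.coeHom_apply, map_prod]
  rfl

lemma closed_main {n d : ℕ} (A : Matrix (Fin n) (Fin d) ℤ)
    (v : Fin d → Fin n → ℤ)
    (hv : ∀ j j', ∑ i, v j i * A i j' = if j' = j then 1 else 0)
    (q : Fin n → ℂ) (hq0 : ∀ i, q i ≠ 0) :
    IsClosed {z' : (Fin n → ℂ) × (Fin n → ℂ) |
        ∃ t : Fin d → ℂˣ, z' = (fun i => (∏ j, (t j : ℂ) ^ A i j) * q i,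
                                fun i => (∏ j, (t j : ℂ) ^ (-A i j)) * 1)} := by
  classical
  have hset : {z' : (Fin n → ℂ) × (Fin n → ℂ) |
        ∃ t : Fin d → ℂˣ, z' = (fun i => (∏ j, (t j : ℂ) ^ A i j) * q i,
                                fun i => (∏ j, (t j : ℂ) ^ (-A i j)) * 1)} =
      {z' : (Fin n → ℂ) × (Fin n → ℂ) | ∀ i, z'.1 i * z'.2 i = q i} ∩
      ⋂ w ∈ {w : Fin n → ℤ | ∀ j, ∑ i', w i' * A i' j = 0},
        {z' : (Fin n → ℂ) × (Fin n → ℂ) |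
          (∏ i, z'.1 i ^ (w i).toNat) * (∏ i, z'.2 i ^ (-(w i)).toNat)
            = ∏ i, q i ^ (w i).toNat} := by
    ext z'
    simp only [Set.mem_setOf_eq, Set.mem_inter_iff, Set.mem_iInter]
    constructor
    · rintro ⟨t, rfl⟩
      have hc1 : ∀ i, (∏ j, (t j : ℂ) ^ A i j) = ((∏ j, t j ^ A i j : ℂˣ) : ℂ) :=
        fun i => coe_prod_zpow t _
      have hc2 : ∀ i, (∏ j, (t j : ℂ) ^ (-A i j)) = ((((∏ j, t j ^ A i j)⁻¹ : ℂˣ)) : ℂ) := by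
        intro i
        rw [coe_prod_zpow t (fun j => -A i j)]
        congr 1
        simp [zpow_neg]
      constructor
      · intro i
        simp only [hc1, hc2, mul_one]
        rw [mul_comm, ← mul_assoc, ← Units.val_mul, inv_mul_cancel, Units.val_one, one_mul]
      · intro w hw
        simp only [hc1, hc2, mul_one]
        rw [lemB (fun i => ∏ j, t j ^ A i j) q w]
        have h1 : ∏ i, (∏ j, t j ^ A i j) ^ w i = 1 := by
          rw [L1 t A w]
          have : ∀ j, ∑ i, w i * A i j = 0 := hw
          simp_rw [this]
          simp
        rw [h1]
        simp
    · rintro ⟨hprod, hker⟩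
      have hx0 : ∀ i, z'.1 i ≠ 0 := fun i => left_ne_zero_of_mul (by rw [hprod i]; exact hq0 i)
      set u : Fin n → ℂˣ := fun i => Units.mk0 (z'.1 i / q i) (div_ne_zero (hx0 i) (hq0 i))
        with hu_def
      have hu1 : ∀ i, (u i : ℂ) * q i = z'.1 i := fun i => div_mul_cancel₀ _ (hq0 i)
      have hu2 : ∀ i, (((u i)⁻¹ : ℂˣ) : ℂ) = z'.2 i := by
        intro i
        have h2 : z'.2 i = q i / z'.1 i := by
          rw [eq_div_iff (hx0 i), mul_comm]
          exact hprod i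
        rw [h2]
        simp [hu_def, Units.val_inv_eq_inv_val, inv_div]
      have hKu : ∀ w : Fin n → ℤ, (∀ j, ∑ i', w i' * A i' j = 0) → ∏ i, u i ^ w i = 1 := by
        intro w hw
        have h := hker w hw
        simp_rw [← hu1, ← hu2] at h
        rw [lemB u q w] at h
        have hqprod : (∏ i, q i ^ (w i).toNat) ≠ 0 :=
          Finset.prod_ne_zero_iff.2 fun i _ => pow_ne_zero _ (hq0 i)
        exact Units.ext (by simpa using mul_right_cancel₀ hqprod (h.trans (one_mul _).symm))
      refine ⟨fun j => ∏ i', u i' ^ v j i', ?_⟩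
      have hti : ∀ i, (∏ j, (∏ i', u i' ^ v j i') ^ A i j : ℂˣ) = u i := by
        intro i
        rw [L1 u v (fun j => A i j)]
        set m' : Fin n → ℤ := fun i' => (∑ j, A i j * v j i') - (if i' = i then 1 else 0)
          with hm_def
        have hm' : ∀ j', ∑ i', m' i' * A i' j' = 0 := by
          intro j'
          simp_rw [hm_def, sub_mul, Finset.sum_sub_distrib]
          have e1 : ∑ i', (∑ j, A i j * v j i') * A i' j' = A i j' := by
            simp_rw [Finset.sum_mul]
            rw [Finset.sum_comm]
            simp_rw [mul_assoc, ← Finset.mul_sum, hv]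
            simp
          have e2 : ∑ i', (if i' = i then (1:ℤ) else 0) * A i' j' = A i j' := by
            simp [ite_mul]
          rw [e1, e2, sub_self]
        have hsplit : ∀ i', (∑ j, A i j * v j i') = m' i' + (if i' = i then 1 else 0) := by
          intro i'; simp [hm_def]
        simp_rw [hsplit, zpow_add, Finset.prod_mul_distrib, hKu m' hm', one_mul]
        simp [apply_ite (fun m : ℤ => u _ ^ m)]
      refine Prod.ext (funext fun i => ?_) (funext fun i => ?_)
      · show z'.1 i = (∏ j, ((∏ i', u i' ^ v j i' : ℂˣ) : ℂ) ^ A i j) * q i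
        rw [coe_prod_zpow, hti i, hu1 i]
      · show z'.2 i = (∏ j, ((∏ i', u i' ^ v j i' : ℂˣ) : ℂ) ^ (-A i j)) * 1
        rw [mul_one, coe_prod_zpow (fun j => ∏ i', u i' ^ v j i') (fun j => -A i j)]
        rw [show (∏ j, (∏ i', u i' ^ v j i') ^ (-A i j) : ℂˣ)
              = (∏ j, (∏ i', u i' ^ v j i') ^ A i j : ℂˣ)⁻¹ by simp [zpow_neg]]
        rw [hti i, hu2 i]
  rw [hset]
  refine IsClosed.inter ?_ (isClosed_biInter fun w hw => isClosed_eq ?_ continuous_const)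
  · have h : {z' : (Fin n → ℂ) × (Fin n → ℂ) | ∀ i, z'.1 i * z'.2 i = q i} =
        ⋂ i, {z' : (Fin n → ℂ) × (Fin n → ℂ) | z'.1 i * z'.2 i = q i} := by
      ext; simp
    rw [h]
    exact isClosed_iInter fun i => isClosed_eq
      (((continuous_apply i).comp continuous_fst).mul ((continuous_apply i).comp continuous_snd))
      continuous_const
  · exact Continuous.mul
      (continuous_finset_prod _ fun i _ => ((continuous_apply i).comp continuous_fst).pow _)
      (continuous_finset_prod _ fun i _ => ((continuous_apply i).comp continuous_snd).pow _)

/-- Let `A` be an `n × d` integer matrix such that (i) the map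
`ℤ^n → ℤ^d` sending the `i`-th standard basis vector to the `i`-th row of `A` is surjective,
and (ii) for every `i` there is an integer vector `w` with `∑_{i'} w i' * A i' j = 0` for all
`j` and `w i ≠ 0`. Then for every `ζ ∈ ℂ^d` there is a point `(x, y) ∈ μ⁻¹(ζ)` whose
`T^d`-orbit is closed (Euclidean topology) and whose stabilizer in `T^d` is trivial:
the set of `0`-stable points of `μ⁻¹(ζ)` is non-empty. -/
theorem stmt5 (n d : ℕ) (A : Matrix (Fin n) (Fin d) ℤ)
    (hA : Function.Surjective fun (v : Fin n → ℤ) (j : Fin d) => ∑ i, v i * A i j)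
    (hB : ∀ i : Fin n, ∃ w : Fin n → ℤ, (∀ j, ∑ i', w i' * A i' j = 0) ∧ w i ≠ 0) :
    ∀ ζ : Fin d → ℂ, ∃ z : (Fin n → ℂ) × (Fin n → ℂ),
      (∀ j, ∑ i, (A i j : ℂ) * (z.1 i * z.2 i) = ζ j) ∧
      IsClosed {z' : (Fin n → ℂ) × (Fin n → ℂ) |
        ∃ t : Fin d → ℂˣ, z' = (fun i => (∏ j, (t j : ℂ) ^ A i j) * z.1 i,
                                fun i => (∏ j, (t j : ℂ) ^ (-A i j)) * z.2 i)} ∧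
      ∀ t : Fin d → ℂˣ,
        ((fun i => (∏ j, (t j : ℂ) ^ A i j) * z.1 i) = z.1 ∧
         (fun i => (∏ j, (t j : ℂ) ^ (-A i j)) * z.2 i) = z.2) → t = 1 := by
  intro ζ
  classical
  -- dual vectors
  have hv' : ∀ j : Fin d, ∃ v : Fin n → ℤ, ∀ j', ∑ i, v i * A i j' = if j' = j then 1 else 0 := by
    intro j
    obtain ⟨v, hvv⟩ := hA (Pi.single j 1)
    exact ⟨v, fun j' => by have := congrFun hvv j'; simpa [Pi.single_apply] using this⟩
  choose v hv using hv'
  -- the point q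
  obtain ⟨q, hq, hq0⟩ : ∃ q : Fin n → ℂ, (∀ j, ∑ i, (A i j : ℂ) * q i = ζ j) ∧ ∀ i, q i ≠ 0 := by
    set p : Fin n → ℂ := fun i => ∑ j, ζ j * (v j i : ℂ) with hp_def
    have hp : ∀ j', ∑ i, (A i j' : ℂ) * p i = ζ j' := by
      intro j'
      calc ∑ i, (A i j' : ℂ) * p i = ∑ i, ∑ j, ζ j * ((v j i : ℂ) * (A i j' : ℂ)) := by
            simp_rw [hp_def, Finset.mul_sum]
            refine Finset.sum_congr rfl fun i _ => Finset.sum_congr rfl fun j _ => by ring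
        _ = ∑ j, ζ j * ((∑ i, v j i * A i j' : ℤ) : ℂ) := by
            rw [Finset.sum_comm]; simp_rw [← Finset.mul_sum]; push_cast; rfl
        _ = ζ j' := by simp_rw [hv]; push_cast; simp
    have key : ∀ S : Finset (Fin n), ∃ k : Fin n → ℂ,
        (∀ j, ∑ i, (A i j : ℂ) * k i = 0) ∧ ∀ i ∈ S, p i + k i ≠ 0 := by
      intro S
      induction S using Finset.induction_on with
      | empty => exact ⟨0, by simp, by simp⟩
      | @insert a S ha ih =>
        obtain ⟨k, hk, hk0⟩ := ih
        obtain ⟨w, hw, hwa⟩ := hB a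
        obtain ⟨s, hs⟩ := Infinite.exists_notMem_finset
          ((insert a S).image fun i => -(p i + k i) / (w i : ℂ))
        refine ⟨fun i => k i + s * (w i : ℂ), fun j => ?_, fun i hi => ?_⟩
        · have h0 : ∑ i, (w i : ℂ) * (A i j : ℂ) = 0 := by
            have := hw j
            have : ((∑ i', w i' * A i' j : ℤ) : ℂ) = 0 := by rw [this]; simp
            push_cast at this
            exact this
          calc ∑ i, (A i j : ℂ) * (k i + s * (w i : ℂ))
              = (∑ i, (A i j : ℂ) * k i) + s * ∑ i, (w i : ℂ) * (A i j : ℂ) := by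
                rw [Finset.mul_sum, ← Finset.sum_add_distrib]
                refine Finset.sum_congr rfl fun i _ => by ring
            _ = 0 := by rw [hk j, h0]; ring
        · rcases eq_or_ne ((w i : ℂ)) 0 with h0 | h0
          · rcases Finset.mem_insert.1 hi with rfl | hiS
            · exact absurd (by exact_mod_cast h0) hwa
            · simpa [h0] using hk0 i hiS
          · intro heq
            apply hs
            refine Finset.mem_image.2 ⟨i, hi, ?_⟩
            rw [div_eq_iff h0]
            linear_combination -heq
    obtain ⟨k, hk, hk0⟩ := key Finset.univ
    refine ⟨fun i => p i + k i, fun j => ?_, fun i => hk0 i (Finset.mem_univ i)⟩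
    simp_rw [mul_add, Finset.sum_add_distrib, hp j, hk j, add_zero]
  refine ⟨(q, fun _ => (1 : ℂ)), fun j => by simpa using hq j, ?_, ?_⟩
  · exact closed_main A v hv q hq0
  · -- trivial stabilizer
    rintro t ⟨h1, _⟩
    have hchar : ∀ i, (∏ j, t j ^ A i j : ℂˣ) = 1 := by
      intro i
      have hi := congrFun h1 i
      simp only [coe_prod_zpow] at hi
      have h3 : ((∏ j, t j ^ A i j : ℂˣ) : ℂ) = 1 :=
        mul_right_cancel₀ (hq0 i) (by simpa using hi)
      exact Units.ext (by simpa using h3)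
    funext j
    have hL := L1 t A (v j)
    simp_rw [hchar, one_zpow, Finset.prod_const_one, hv j] at hL
    have : (1 : ℂˣ) = t j := by
      rw [hL]
      simp [apply_ite (fun m : ℤ => t _ ^ m)]
    exact this.symm.trans rfl
end
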